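/- arXiv:2309.05979 — 3 statements merged into one kernel-verified Lean document; each statement's English description precedes it below -/
import Mathlib

section
/- Let A be an n×n real matrix, u ≠ v indices with A_{u,j} = A_{v,j} for all j ∉ {u,v}. Set c = A_{v,u}, a_u = A_{u,u}, a_v = A_{v,v}, b = A_{u,v}. Define P = (c − a_u)x_u + (a_v − b)x_v, K_{u,v} = 1 − (h/2)((Ax)_v + (a_v − b)x_v), K_{v,u} = 1 − (h/2)((Ax)_u + (a_u − c)x_u), and L = 1 − (h/2)((Ax)_u − (a_u − c)x_u). Then (c − a_u)x_u·K_{u,v} + (a_v − b)x_v·K_{v,u} = P·L as polynomials in x₁,…,x_n. -/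
open Matrix

theorem Matrix.row_sub_row_eq_single_add_single {ι R : Type*} [DecidableEq ι] [AddGroup R]
    (A : Matrix ι ι R) {u v : ι} (hrow : ∀ j, j ≠ u → j ≠ v → A u j = A v j) :
    A v - A u = Pi.single u (A v u - A u u) + Pi.single v (A v v - A u v) := by
  ext j
  by_cases hju : j = u <;> by_cases hjv : j = v
  · subst hju hjv; simp
  · subst hju; simp [hjv]
  · subst hjv; simp [hju]
  · simp [hju, hjv, hrow j hju hjv]

theorem Matrix.mulVec_sub_mulVec_of_rows_agree {ι R : Type*} [Fintype ι] [DecidableEq ι] [Ring R]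
    (A : Matrix ι ι R) {u v : ι} (hrow : ∀ j, j ≠ u → j ≠ v → A u j = A v j) (x : ι → R) :
    (A *ᵥ x) v - (A *ᵥ x) u = (A v u - A u u) * x u + (A v v - A u v) * x v := by
  rw [mulVec, mulVec, ← sub_dotProduct, A.row_sub_row_eq_single_add_single hrow, add_dotProduct,
    single_dotProduct, single_dotProduct]

theorem stmt_7_general {n : ℕ} (A : Matrix (Fin n) (Fin n) ℝ) (h : ℝ) (u v : Fin n)
    (hrow : ∀ j, j ≠ u → j ≠ v → A u j = A v j) :
    ∀ x : Fin n → ℝ,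
      (A v u - A u u) * x u *
          (1 - h / 2 * (A.mulVec x v + (A v v - A u v) * x v))
        + (A v v - A u v) * x v *
          (1 - h / 2 * (A.mulVec x u + (A u u - A v u) * x u))
      = ((A v u - A u u) * x u + (A v v - A u v) * x v) *
          (1 - h / 2 * (A.mulVec x u - (A u u - A v u) * x u)) := by
  intro x
  linear_combination (-(h / 2) * (A v u - A u u) * x u) * A.mulVec_sub_mulVec_of_rows_agree hrow x

/-- Key algebraic identity for the cofactor of the edge Darboux polynomial
under the Kahan map: `(c−a_u)x_u·K_{u,v} + (a_v−b)x_v·K_{v,u} = P·L`. -/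
theorem stmt_7 {n : ℕ} (A : Matrix (Fin n) (Fin n) ℝ) (h : ℝ) (u v : Fin n)
    (huv : u ≠ v) (hrow : ∀ j, j ≠ u → j ≠ v → A u j = A v j) :
    ∀ x : Fin n → ℝ,
      (A v u - A u u) * x u *
          (1 - h / 2 * (A.mulVec x v + (A v v - A u v) * x v))
        + (A v v - A u v) * x v *
          (1 - h / 2 * (A.mulVec x u + (A u u - A v u) * x u))
      = ((A v u - A u u) * x u + (A v v - A u v) * x v) *
          (1 - h / 2 * (A.mulVec x u - (A u u - A v u) * x u)) :=
  stmt_7_general A h u v hrow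
end

section
/- Let T be a tree on n vertices with edges e_i = (u_i, v_i), i = 1,…,n−1, and let A be the adjacency matrix of the associated weighted complete digraph, i.e., A satisfies A_{u_i,j} = A_{v_i,j} for all j ∉ {u_i,v_i} and each edge e_i. Let B be the (n−1)×n matrix with B_{i,j} = A_{j,j} if j ∈ {u_i,v_i} and B_{i,j} = A_{u_i,j} otherwise, let m_i be the degree of vertex i, and let a = (A_{1,1},…,A_{n,n}). Then for every p ∈ {1,…,n}: Σ_{i=1}^n (1 − m_i) A_{i,p} + Σ_{i=1}^{n−1} B_{i,p} − A_{p,p} = 0. -/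
/-!
Summing the identity `(1 - m_i) A_{i,p} = A_{i,p} - Σ_{edges ∋ i} A_{i,p}` over all vertices turns the
degree term into a sum over the edges `{u, w}` of `A_{u,p} + A_{w,p}`. Subtracting `B_{k,p}` leaves,
for every edge, the entry `A_{v,p}` of its endpoint `v` farther from `p`: either `p` is the other
endpoint and `B_{k,p} = A_{p,p}`, or `p` is off the edge and `B_{k,p} = A_{u,p} = A_{w,p}`. In a tree,
"farther endpoint" is a bijection from the edges onto the vertices other than `p`, so the edge sum is
`Σ_{v ≠ p} A_{v,p}`, which cancels against `Σ_i A_{i,p} - A_{p,p}`.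
-/

open Finset

namespace SimpleGraph

variable {V ι : Type*} {G : SimpleGraph V}

theorem Connected.exists_adj_dist_add_one_eq (hG : G.Connected) {v p : V} (hv : v ≠ p) :
    ∃ w, G.Adj v w ∧ G.dist w p + 1 = G.dist v p := by
  obtain ⟨q, hq⟩ := (hG.preconnected v p).exists_walk_length_eq_dist
  cases q with
  | nil => exact absurd rfl hv
  | @cons _ w _ hvw q =>
    have hq_le := dist_le q
    have htriangle : G.dist v p ≤ G.dist v w + G.dist w p := hG.dist_triangle
    rw [dist_eq_one_iff_adj.2 hvw] at htriangle
    rw [Walk.length_cons] at hq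
    exact ⟨w, hvw, by omega⟩

variable [Fintype V] [DecidableRel G.Adj] [Fintype ι] {e : ι → V × V}

theorem card_eq_card_edgeFinset_of_enum (hadj : ∀ k, G.Adj (e k).1 (e k).2)
    (hinj : Function.Injective fun k => s((e k).1, (e k).2))
    (hsurj : ∀ ed ∈ G.edgeSet, ∃ k, s((e k).1, (e k).2) = ed) :
    Fintype.card ι = #G.edgeFinset := by
  rw [edgeFinset_card]
  refine Fintype.card_of_bijective (f := fun k => (⟨s((e k).1, (e k).2), hadj k⟩ : G.edgeSet))
    ⟨fun a b h => hinj (congrArg Subtype.val h), fun ⟨ed, hed⟩ => ?_⟩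
  obtain ⟨k, hk⟩ := hsurj ed hed
  exact ⟨k, Subtype.ext hk⟩

variable [DecidableEq V]

theorem degree_eq_card_filter_of_enum (hadj : ∀ k, G.Adj (e k).1 (e k).2)
    (hinj : Function.Injective fun k => s((e k).1, (e k).2))
    (hsurj : ∀ ed ∈ G.edgeSet, ∃ k, s((e k).1, (e k).2) = ed) (v : V) :
    G.degree v = #{k | v ∈ s((e k).1, (e k).2)} := by
  rw [← card_incidenceFinset_eq_degree]
  symm
  refine card_bij (fun k _ => s((e k).1, (e k).2)) (fun k hk => ?_)
    (fun a _ b _ hab => hinj hab) (fun ed hed => ?_)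
  · rw [mem_filter] at hk
    exact (G.mem_incidenceFinset v _).2 ⟨hadj k, hk.2⟩
  · obtain ⟨hed, hv⟩ := (G.mem_incidenceFinset v _).1 hed
    obtain ⟨k, rfl⟩ := hsurj ed hed
    exact ⟨k, mem_filter.2 ⟨mem_univ k, hv⟩, rfl⟩

theorem sum_degree_mul_eq_sum_enum {R : Type*} [NonAssocSemiring R]
    (hadj : ∀ k, G.Adj (e k).1 (e k).2)
    (hinj : Function.Injective fun k => s((e k).1, (e k).2))
    (hsurj : ∀ ed ∈ G.edgeSet, ∃ k, s((e k).1, (e k).2) = ed) (f : V → R) :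
    ∑ v, (G.degree v : R) * f v = ∑ k, (f (e k).1 + f (e k).2) := by
  have hendpoints :
      ∀ k, ∑ v, (if v ∈ s((e k).1, (e k).2) then f v else 0) = f (e k).1 + f (e k).2 := by
    intro k
    rw [← sum_filter, ← sum_pair (hadj k).ne]
    congr 1
    ext v
    simp
  simp_rw [degree_eq_card_filter_of_enum hadj hinj hsurj, card_filter, Nat.cast_sum, sum_mul,
    Nat.cast_ite, Nat.cast_one, Nat.cast_zero, ite_mul, one_mul, zero_mul]
  rw [sum_comm]
  exact sum_congr rfl fun k _ => hendpoints k

theorem IsTree.sum_enum_eq_sum_erase (hG : G.IsTree) (hadj : ∀ k, G.Adj (e k).1 (e k).2)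
    (hinj : Function.Injective fun k => s((e k).1, (e k).2))
    (hsurj : ∀ ed ∈ G.edgeSet, ∃ k, s((e k).1, (e k).2) = ed) (p : V) {M : Type*}
    [AddCommMonoid M] (g : ι → M) (h : V → M)
    (hgh : ∀ k v, v ∈ s((e k).1, (e k).2) → v ≠ p → g k = h v) :
    ∑ k, g k = ∑ v ∈ univ.erase p, h v := by
  choose par hpar hdist using fun v (hv : v ≠ p) => hG.connected.exists_adj_dist_add_one_eq hv
  choose φ hφ using fun v : {v // v ≠ p} => hsurj _ (G.mem_edgeSet.2 (hpar v.1 v.2))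
  have hφinj : Function.Injective φ := by
    rintro ⟨v, hv⟩ ⟨w, hw⟩ hvw
    have hedge : s(v, par v hv) = s(w, par w hw) := by
      rw [← hφ ⟨v, hv⟩, ← hφ ⟨w, hw⟩, hvw]
    rcases Sym2.eq_iff.1 hedge with ⟨rfl, -⟩ | ⟨hv_par, hpar_w⟩
    · rfl
    · have hv_dist := hdist v hv
      have hw_dist := hdist w hw
      rw [hpar_w] at hv_dist
      rw [← hv_par] at hw_dist
      omega
  have hcard : Fintype.card {v // v ≠ p} = Fintype.card ι := by
    have := hG.card_edgeFinset
    rw [← card_eq_card_edgeFinset_of_enum hadj hinj hsurj] at this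
    rw [Fintype.card_subtype_compl, Fintype.card_subtype_eq]
    omega
  have hφbij : Function.Bijective φ :=
    (Fintype.bijective_iff_injective_and_card φ).2 ⟨hφinj, hcard⟩
  rw [sum_subtype (p := (· ≠ p)) (univ.erase p) (fun v => by simp) h]
  refine (Fintype.sum_bijective φ hφbij _ _ fun v => (hgh _ _ ?_ v.2).symm).symm
  rw [hφ]
  exact Sym2.mem_mk_left _ _

end SimpleGraph

theorem Matrix.add_sub_ite_eq_of_rows_agree {α R : Type*} [DecidableEq α] [AddCommGroup R]
    (A : Matrix α α R) {u w p v : α} (hA : ∀ j, j ≠ u → j ≠ w → A u j = A w j)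
    (hv : v = u ∨ v = w) (hvp : v ≠ p) :
    A u p + A w p - (if p = u ∨ p = w then A p p else A u p) = A v p := by
  split_ifs with hp
  · rcases hv with rfl | rfl <;> rcases hp with rfl | rfl <;> first | exact absurd rfl hvp | abel
  · push Not at hp
    rcases hv with rfl | rfl
    · rw [hA p hp.1 hp.2]
      abel
    · abel

theorem stmt_11_general {n : ℕ} (G : SimpleGraph (Fin n)) [DecidableRel G.Adj]
    (hG : G.IsTree) (e : Fin (n - 1) → Fin n × Fin n)
    (hadj : ∀ i, G.Adj (e i).1 (e i).2)
    (hinj : Function.Injective fun i => s((e i).1, (e i).2))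
    (hsurj : ∀ ed ∈ G.edgeSet, ∃ i, s((e i).1, (e i).2) = ed)
    (A : Matrix (Fin n) (Fin n) ℝ)
    (hA : ∀ i : Fin (n - 1), ∀ j, j ≠ (e i).1 → j ≠ (e i).2 →
      A (e i).1 j = A (e i).2 j)
    (B : Fin (n - 1) → Fin n → ℝ)
    (hB : ∀ i j, B i j = if j = (e i).1 ∨ j = (e i).2 then A j j else A (e i).1 j) :
    ∀ p : Fin n,
      (∑ i, (1 - (G.degree i : ℝ)) * A i p) + (∑ i, B i p) - A p p = 0 := by
  intro p
  have hdegree := G.sum_degree_mul_eq_sum_enum hadj hinj hsurj fun i => A i p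
  have hedges := hG.sum_enum_eq_sum_erase hadj hinj hsurj p
    (fun k => A (e k).1 p + A (e k).2 p - B k p) (fun v => A v p) fun k v hv hvp => by
      rw [hB]
      exact A.add_sub_ite_eq_of_rows_agree (hA k) (Sym2.mem_iff.1 hv) hvp
  have hroot := sum_erase_add univ (fun v => A v p) (mem_univ p)
  simp only [sub_mul, one_mul, sum_sub_distrib] at hdegree hedges ⊢
  linarith

/-- The key identity proving measure preservation for Lotka--Volterra
tree-systems: for each vertex `p`,
`Σ_i (1 − m_i) A_{i,p} + Σ_i B_{i,p} − A_{p,p} = 0`. -/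
theorem stmt_11 {n : ℕ} (hn : 1 ≤ n) (G : SimpleGraph (Fin n)) [DecidableRel G.Adj]
    (hG : G.IsTree) (e : Fin (n - 1) → Fin n × Fin n)
    (hadj : ∀ i, G.Adj (e i).1 (e i).2)
    (hinj : Function.Injective fun i => s((e i).1, (e i).2))
    (hsurj : ∀ ed ∈ G.edgeSet, ∃ i, s((e i).1, (e i).2) = ed)
    (A : Matrix (Fin n) (Fin n) ℝ)
    (hA : ∀ i : Fin (n - 1), ∀ j, j ≠ (e i).1 → j ≠ (e i).2 →
      A (e i).1 j = A (e i).2 j)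
    (B : Fin (n - 1) → Fin n → ℝ)
    (hB : ∀ i j, B i j = if j = (e i).1 ∨ j = (e i).2 then A j j else A (e i).1 j) :
    ∀ p : Fin n,
      (∑ i, (1 - (G.degree i : ℝ)) * A i p) + (∑ i, B i p) - A p p = 0 :=
  stmt_11_general G hG e hadj hinj hsurj A hA B hB
end

section
/- Let G be a graph and let v₁,…,v_ℓ (ℓ ≥ 3) be the vertices of a cycle in G. Let A be an n×n matrix satisfying, for each cycle edge (v_t, v_{t+1}) (indices mod ℓ): A_{v_t,k} = A_{v_{t+1},k} for all k ∉ {v_t, v_{t+1}}. Then for every pair of distinct cycle vertices v_i, v_j and every k ∉ {v_i, v_j}, A_{v_i,k} = A_{v_j,k}. -/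
/-!
Fix a column `k`. Since `v` is injective, at most one cycle vertex `b` equals `k`; starting
from `b + 1` and walking once around the cycle up to `b - 1` never meets `b`, so the entries
`A (v t) k` agree along the whole walk. If no cycle vertex equals `k`, every step is allowed.
-/

namespace ZMod

variable {ℓ : ℕ} {β : Type*}

theorem apply_add_natCast_eq {g : ZMod ℓ → β} {a : ZMod ℓ} (m : ℕ)
    (hg : ∀ r < m, g (a + r) = g (a + r + 1)) : g (a + m) = g a := by
  induction m with
  | zero => simp
  | succ m ih =>
    rw [Nat.cast_succ, ← add_assoc, ← hg m m.lt_succ_self]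
    exact ih fun r hr => hg r (hr.trans m.lt_succ_self)

theorem add_natCast_ne_self (b : ZMod ℓ) {m : ℕ} (hm₀ : 0 < m) (hm : m < ℓ) :
    b + m ≠ b := by
  rw [Ne, add_eq_left, natCast_eq_zero_iff]
  exact fun h => (Nat.eq_zero_of_dvd_of_lt h hm).not_gt hm₀

variable [NeZero ℓ]

theorem apply_eq_apply_of_apply_add_one_eq {g : ZMod ℓ → β}
    (hg : ∀ t, g t = g (t + 1)) (i j : ZMod ℓ) : g i = g j := by
  have hj : i + ((j - i).val : ZMod ℓ) = j := by rw [natCast_zmod_val]; ring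
  rw [← hj, apply_add_natCast_eq _ fun r _ => hg _]

theorem apply_eq_apply_of_apply_add_one_eq_of_ne {g : ZMod ℓ → β} (b : ZMod ℓ)
    (hg : ∀ t, t ≠ b → t + 1 ≠ b → g t = g (t + 1)) {i j : ZMod ℓ} (hi : i ≠ b)
    (hj : j ≠ b) : g i = g j := by
  suffices h : ∀ i, i ≠ b → g i = g (b + 1) from (h i hi).trans (h j hj).symm
  intro i hi
  obtain ⟨m, hm⟩ := Nat.exists_eq_add_one_of_ne_zero ((val_ne_zero _).mpr (sub_ne_zero.mpr hi))
  have hmℓ : m + 1 < ℓ := by simpa [hm] using val_lt (i - b)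
  have hbi : b + 1 + (m : ZMod ℓ) = i := by
    rw [add_assoc, add_comm 1, ← Nat.cast_add_one, ← hm, natCast_zmod_val]
    ring
  rw [← hbi]
  refine apply_add_natCast_eq m fun r hr => hg _ ?_ ?_
  · convert add_natCast_ne_self b r.succ_pos (by omega) using 1
    push_cast; ring
  · convert add_natCast_ne_self b (r + 1).succ_pos (by omega) using 1
    push_cast; ring

end ZMod

/-- If the edge conditions hold along all edges of a cycle `v₁,…,v_ℓ` (`ℓ ≥ 3`),
then they hold for every pair of distinct vertices of the cycle. -/
theorem stmt_13 {n ℓ : ℕ} (hℓ : 3 ≤ ℓ) (A : Matrix (Fin n) (Fin n) ℝ)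
    (v : ZMod ℓ → Fin n) (hv : Function.Injective v)
    (hA : ∀ t : ZMod ℓ, ∀ k, k ≠ v t → k ≠ v (t + 1) → A (v t) k = A (v (t + 1)) k) :
    ∀ i j : ZMod ℓ, i ≠ j → ∀ k, k ≠ v i → k ≠ v j → A (v i) k = A (v j) k := by
  have : NeZero ℓ := ⟨by omega⟩
  intro i j _ k hki hkj
  by_cases hk : ∃ b, v b = k
  · obtain ⟨b, rfl⟩ := hk
    exact ZMod.apply_eq_apply_of_apply_add_one_eq_of_ne (g := fun t => A (v t) (v b)) b
      (fun t htb ht₁b => hA t _ (hv.ne htb).symm (hv.ne ht₁b).symm)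
      (fun h => hki (h ▸ rfl)) (fun h => hkj (h ▸ rfl))
  · push Not at hk
    exact ZMod.apply_eq_apply_of_apply_add_one_eq (g := fun t => A (v t) k)
      (fun t => hA t k (hk t).symm (hk _).symm) i j
end
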